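/- Let α > 0 and let u : ℝ → ℝ be of class C². Define τ(g) = 4t/N(g)², ψ(g) = (|x|²+|y|²)/N(g)², and v(g) = N(g)^α · u(τ(g)). Then for every g = (x,y,t) with (x,y) ≠ 0 one has ℒ₀v(g) = 4·ψ(g)·N(g)^(α−2)·[ (1−τ(g)²)·u''(τ(g)) − (n+1)·τ(g)·u'(τ(g)) + (α(α+2n)/4)·u(τ(g)) ]. -/

import Mathlib

open MeasureTheory Filter
open scoped BigOperators ENNReal Topology NNReal

noncomputable section

abbrev Hpt (n : ℕ) : Type := (Fin n → ℝ) × (Fin n → ℝ) × ℝ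

namespace Heis

variable {n : ℕ}

/-- squared Euclidean norm of a vector in `ℝⁿ`. -/
def sqn (x : Fin n → ℝ) : ℝ := ∑ i, (x i) ^ 2

/-- The Korányi gauge `N(x,y,t) = ((|x|²+|y|²)² + 16 t²)^(1/4)`. -/
def gaugeN (g : Hpt n) : ℝ :=
  ((sqn g.1 + sqn g.2.1) ^ 2 + 16 * g.2.2 ^ 2) ^ ((1 : ℝ) / 4)

/-- Heisenberg group multiplication. -/
def hMul (g g' : Hpt n) : Hpt n :=
  (g.1 + g'.1, g.2.1 + g'.2.1,
    g.2.2 + g'.2.2 + (1 / 2) * ((∑ i, g.1 i * g'.2.1 i) - ∑ i, g.2.1 i * g'.1 i))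

/-- Heisenberg group inverse. -/
def hInv (g : Hpt n) : Hpt n := (-g.1, -g.2.1, -g.2.2)

/-- The gauge distance `ρ(g,g') = N(g⁻¹ ⬝ g')`. -/
def rho (g g' : Hpt n) : ℝ := gaugeN (hMul (hInv g) g')

/-- The gauge ball. -/
def ballRho (g : Hpt n) (r : ℝ) : Set (Hpt n) := {g' | rho g g' < r}

/-- The coefficient vector at `g` of the horizontal vector field `X_j`
(`X_j = ∂_{x_j} - (y_j/2) ∂_t` and `X_{n+j} = ∂_{y_j} + (x_j/2) ∂_t`). -/
def Xvec (j : Fin n ⊕ Fin n) (g : Hpt n) : Hpt n :=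
  match j with
  | Sum.inl i => (Pi.single i 1, 0, -(g.2.1 i) / 2)
  | Sum.inr i => (0, Pi.single i 1, (g.1 i) / 2)

/-- The derivative `X_j u` of `u` along the horizontal vector field `X_j`. -/
def Xd (j : Fin n ⊕ Fin n) (u : Hpt n → ℝ) (g : Hpt n) : ℝ :=
  fderiv ℝ u g (Xvec j g)

/-- The sub-Laplacian `ℒ₀ u = ∑ X_j² u`. -/
def subLap (u : Hpt n → ℝ) (g : Hpt n) : ℝ :=
  ∑ j : Fin n ⊕ Fin n, Xd j (Xd j u) g

/-- Length of the horizontal gradient `|∇_H u|`. -/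
def hGradNorm (u : Hpt n → ℝ) (g : Hpt n) : ℝ :=
  Real.sqrt (∑ j : Fin n ⊕ Fin n, (Xd j u g) ^ 2)


end Heis

open Heis

/-! On functions of `(|z|², 4t)` the horizontal fields act through the chain rule, and the
horizontal gradients of the two coordinates are `(2x_j, -2y_j)` for `X_j` and its rotation
`(2y_j, 2x_j)` for `X_{n+j}`. Summing over `j` the cross terms cancel, so
`ℒ₀ (F(|z|², 4t)) = 4|z|² ΔF + 4n ∂₁F` with `Δ` the flat Laplacian of the plane.
Now `v = F(|z|², 4t)` for `F(a, b) = (a² + b²)^(α/4) u(b / √(a² + b²))`, homogeneous of degree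
`α/2` with angular profile `u(sin φ)`, and `Δ F = ρ^(α/2-2) ((1-τ²)u'' - τu' + (α/2)² u)`,
`∂₁F = a ρ^(α/2-2) ((α/2) u - τu')` with `ρ = √(a² + b²) = N²`, which combine to the formula.
-/

namespace Heis

variable {n : ℕ}

lemma fderiv_apply_eq_of_hasDerivAt_line {E F : Type*} [NormedAddCommGroup E] [NormedSpace ℝ E]
    [NormedAddCommGroup F] [NormedSpace ℝ F] {f : E → F} {x v : E} {f' : F}
    (hf : DifferentiableAt ℝ f x) (hline : HasDerivAt (fun ε : ℝ => f (x + ε • v)) f' 0) :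
    fderiv ℝ f x v = f' :=
  hf.lineDeriv_eq_fderiv.symm.trans (HasLineDerivAt.lineDeriv hline)

lemma fderiv_apply_one_zero_eq_deriv {F : ℝ × ℝ → ℝ} {q : ℝ × ℝ}
    (hF : DifferentiableAt ℝ F q) :
    fderiv ℝ F q (1, 0) = deriv (fun a => F (a, q.2)) q.1 :=
  (hF.hasFDerivAt.comp_hasDerivAt (f := fun a : ℝ => (a, q.2)) q.1
    ((hasDerivAt_id q.1).prodMk (hasDerivAt_const q.1 q.2))).deriv.symm

lemma fderiv_apply_zero_one_eq_deriv {F : ℝ × ℝ → ℝ} {q : ℝ × ℝ}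
    (hF : DifferentiableAt ℝ F q) :
    fderiv ℝ F q (0, 1) = deriv (fun b => F (q.1, b)) q.2 :=
  (hF.hasFDerivAt.comp_hasDerivAt (f := fun b : ℝ => (q.1, b)) q.2
    ((hasDerivAt_const q.2 q.1).prodMk (hasDerivAt_id q.2))).deriv.symm

lemma fderiv_fderiv_apply_one_zero_eq_deriv_deriv {F : ℝ × ℝ → ℝ} {q : ℝ × ℝ}
    (hF : ContDiffAt ℝ 2 F q) :
    fderiv ℝ (fderiv ℝ F) q (1, 0) (1, 0) = deriv (deriv fun a => F (a, q.2)) q.1 := by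
  have hslice :
      (deriv fun a => F (a, q.2)) =ᶠ[𝓝 q.1] fun a => fderiv ℝ F (a, q.2) (1, 0) := by
    have hcont : Continuous fun a : ℝ => (a, q.2) := by fun_prop
    filter_upwards [hcont.continuousAt.eventually (hF.eventually (by simp))] with a ha
    exact (fderiv_apply_one_zero_eq_deriv (ha.differentiableAt (by simp))).symm
  have hF' : DifferentiableAt ℝ (fderiv ℝ F) q :=
    (hF.fderiv_right (m := 1) le_rfl).differentiableAt one_ne_zero
  rw [hslice.deriv_eq, ← fderiv_apply_one_zero_eq_deriv (F := fun q => fderiv ℝ F q (1, 0))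
    (hF'.clm_apply (differentiableAt_const _)), fderiv_clm_apply hF' (differentiableAt_const _)]
  simp

lemma fderiv_fderiv_apply_zero_one_eq_deriv_deriv {F : ℝ × ℝ → ℝ} {q : ℝ × ℝ}
    (hF : ContDiffAt ℝ 2 F q) :
    fderiv ℝ (fderiv ℝ F) q (0, 1) (0, 1) = deriv (deriv fun b => F (q.1, b)) q.2 := by
  have hslice :
      (deriv fun b => F (q.1, b)) =ᶠ[𝓝 q.2] fun b => fderiv ℝ F (q.1, b) (0, 1) := by
    have hcont : Continuous fun b : ℝ => (q.1, b) := by fun_prop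
    filter_upwards [hcont.continuousAt.eventually (hF.eventually (by simp))] with b hb
    exact (fderiv_apply_zero_one_eq_deriv (hb.differentiableAt (by simp))).symm
  have hF' : DifferentiableAt ℝ (fderiv ℝ F) q :=
    (hF.fderiv_right (m := 1) le_rfl).differentiableAt one_ne_zero
  rw [hslice.deriv_eq, ← fderiv_apply_zero_one_eq_deriv (F := fun q => fderiv ℝ F q (0, 1))
    (hF'.clm_apply (differentiableAt_const _)), fderiv_clm_apply hF' (differentiableAt_const _)]
  simp

lemma bilin_self_add_bilin_rot_self (B : ℝ × ℝ →L[ℝ] ℝ × ℝ →L[ℝ] ℝ) (a b : ℝ) :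
    B (a, -b) (a, -b) + B (b, a) (b, a)
      = (a ^ 2 + b ^ 2) * (B (1, 0) (1, 0) + B (0, 1) (0, 1)) := by
  have hdecomp : ∀ c d : ℝ, ((c, d) : ℝ × ℝ) = c • (1, 0) + d • (0, 1) := by
    intro c d; ext <;> simp
  rw [hdecomp a, hdecomp b]
  simp only [map_add, map_smul, add_apply, smul_apply, smul_eq_mul]
  ring

def planarLap (F : ℝ × ℝ → ℝ) (q : ℝ × ℝ) : ℝ :=
  fderiv ℝ (fderiv ℝ F) q (1, 0) (1, 0) + fderiv ℝ (fderiv ℝ F) q (0, 1) (0, 1)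

/-- `(|z|², 4t)`, a point of the plane whose squared Euclidean norm is `N⁴`. -/
def gaugeCoords (h : Hpt n) : ℝ × ℝ := (sqn h.1 + sqn h.2.1, 4 * h.2.2)

/-- `(X_j |z|², X_j (4t))`. -/
def XgaugeCoords : Fin n ⊕ Fin n → Hpt n → ℝ × ℝ
  | .inl i, h => (2 * h.1 i, -(2 * h.2.1 i))
  | .inr i, h => (2 * h.2.1 i, 2 * h.1 i)

lemma sqn_add_smul_single (x : Fin n → ℝ) (i : Fin n) (ε : ℝ) :
    sqn (x + ε • (Pi.single i 1 : Fin n → ℝ)) = sqn x + ε * (2 * x i) + ε ^ 2 := by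
  have hterm : ∀ k, (x + ε • (Pi.single i 1 : Fin n → ℝ)) k ^ 2
      = x k ^ 2 + if k = i then ε * (2 * x i) + ε ^ 2 else 0 := by
    intro k
    by_cases hk : k = i
    · subst hk; simp; ring
    · simp [hk]
  simp only [sqn, hterm, Finset.sum_add_distrib, Finset.sum_ite_eq', Finset.mem_univ, if_true]
  ring

lemma gaugeCoords_add_smul_Xvec (j : Fin n ⊕ Fin n) (h : Hpt n) (ε : ℝ) :
    gaugeCoords (h + ε • Xvec j h) = gaugeCoords h + ε • XgaugeCoords j h + (ε ^ 2, 0) := by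
  cases j <;>
  · simp only [gaugeCoords, Xvec, XgaugeCoords, Prod.fst_add, Prod.snd_add,
      smul_zero, add_zero, sqn_add_smul_single, Prod.mk_add_mk, Prod.smul_mk,
      smul_eq_mul]
    ext <;> ring

lemma XgaugeCoords_add_smul_Xvec (j : Fin n ⊕ Fin n) (h : Hpt n) (ε : ℝ) :
    XgaugeCoords j (h + ε • Xvec j h) = XgaugeCoords j h + ε • (2, 0) := by
  cases j <;>
  · simp only [Xvec, XgaugeCoords, Prod.fst_add, Prod.snd_add,
      Pi.add_apply, Pi.smul_apply, Pi.single_eq_same, Pi.zero_apply, smul_zero, add_zero,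
      Prod.mk_add_mk, Prod.smul_mk, smul_eq_mul]
    ext <;> ring

lemma differentiable_gaugeCoords : Differentiable ℝ (gaugeCoords : Hpt n → ℝ × ℝ) := by
  unfold gaugeCoords sqn; fun_prop

lemma differentiable_XgaugeCoords (j : Fin n ⊕ Fin n) :
    Differentiable ℝ (XgaugeCoords j : Hpt n → ℝ × ℝ) := by
  cases j <;> unfold XgaugeCoords <;> fun_prop

lemma fderiv_gaugeCoords_Xvec (j : Fin n ⊕ Fin n) (h : Hpt n) :
    fderiv ℝ gaugeCoords h (Xvec j h) = XgaugeCoords j h := by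
  refine fderiv_apply_eq_of_hasDerivAt_line (differentiable_gaugeCoords h) ?_
  simp only [gaugeCoords_add_smul_Xvec]
  have hsq : HasDerivAt (fun ε : ℝ => ((ε ^ 2, 0) : ℝ × ℝ)) (0, 0) 0 := by
    simpa using (hasDerivAt_pow 2 (0 : ℝ)).prodMk (hasDerivAt_const (0 : ℝ) (0 : ℝ))
  convert (((hasDerivAt_id (0 : ℝ)).smul_const (XgaugeCoords j h)).const_add
    (gaugeCoords h)).add hsq using 1
  · rfl
  · simp

lemma fderiv_XgaugeCoords_Xvec (j : Fin n ⊕ Fin n) (h : Hpt n) :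
    fderiv ℝ (XgaugeCoords j) h (Xvec j h) = (2, 0) := by
  refine fderiv_apply_eq_of_hasDerivAt_line (differentiable_XgaugeCoords j h) ?_
  simp only [XgaugeCoords_add_smul_Xvec]
  simpa using ((hasDerivAt_id (0 : ℝ)).smul_const ((2, 0) : ℝ × ℝ)).const_add
    (XgaugeCoords j h)

lemma Xd_comp_gaugeCoords {F : ℝ × ℝ → ℝ} (j : Fin n ⊕ Fin n) {h : Hpt n}
    (hF : DifferentiableAt ℝ F (gaugeCoords h)) :
    Xd j (fun h => F (gaugeCoords h)) h = fderiv ℝ F (gaugeCoords h) (XgaugeCoords j h) := by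
  rw [Xd, show (fun h => F (gaugeCoords h)) = F ∘ gaugeCoords from rfl,
    fderiv_comp h hF (differentiable_gaugeCoords h), ContinuousLinearMap.comp_apply,
    fderiv_gaugeCoords_Xvec]

lemma Xd_Xd_comp_gaugeCoords {F : ℝ × ℝ → ℝ} (j : Fin n ⊕ Fin n) {g : Hpt n}
    (hF : ContDiffAt ℝ 2 F (gaugeCoords g)) :
    Xd j (Xd j (fun h => F (gaugeCoords h))) g
      = fderiv ℝ F (gaugeCoords g) (2, 0)
        + fderiv ℝ (fderiv ℝ F) (gaugeCoords g) (XgaugeCoords j g) (XgaugeCoords j g) := by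
  have hnear : Xd j (fun h => F (gaugeCoords h))
      =ᶠ[𝓝 g] fun h => fderiv ℝ F (gaugeCoords h) (XgaugeCoords j h) := by
    have hcont := (differentiable_gaugeCoords g).continuousAt.eventually
      (hF.eventually (by simp))
    filter_upwards [hcont] with h hh
    exact Xd_comp_gaugeCoords j (hh.differentiableAt (by simp))
  have hF' : HasFDerivAt (fun h => fderiv ℝ F (gaugeCoords h))
      ((fderiv ℝ (fderiv ℝ F) (gaugeCoords g)).comp (fderiv ℝ gaugeCoords g)) g :=
    ((hF.fderiv_right (m := 1) le_rfl).differentiableAt one_ne_zero).hasFDerivAt.comp g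
      (differentiable_gaugeCoords g).hasFDerivAt
  rw [Xd, hnear.fderiv_eq, (hF'.clm_apply (differentiable_XgaugeCoords j g).hasFDerivAt).fderiv]
  simp [fderiv_gaugeCoords_Xvec, fderiv_XgaugeCoords_Xvec]

theorem subLap_comp_gaugeCoords {F : ℝ × ℝ → ℝ} {g : Hpt n}
    (hF : ContDiffAt ℝ 2 F (gaugeCoords g)) :
    subLap (fun h => F (gaugeCoords h)) g
      = 4 * (gaugeCoords g).1 * planarLap F (gaugeCoords g)
        + 4 * n * fderiv ℝ F (gaugeCoords g) (1, 0) := by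
  have htwo : fderiv ℝ F (gaugeCoords g) (2, 0) = 2 * fderiv ℝ F (gaugeCoords g) (1, 0) := by
    rw [show ((2, 0) : ℝ × ℝ) = (2 : ℝ) • (1, 0) by simp, map_smul, smul_eq_mul]
  have hterm : ∀ i, Xd (.inl i) (Xd (.inl i) (fun h => F (gaugeCoords h))) g
      + Xd (.inr i) (Xd (.inr i) (fun h => F (gaugeCoords h))) g
      = 4 * fderiv ℝ F (gaugeCoords g) (1, 0)
        + ((2 * g.1 i) ^ 2 + (2 * g.2.1 i) ^ 2) * planarLap F (gaugeCoords g) := by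
    intro i
    rw [Xd_Xd_comp_gaugeCoords _ hF, Xd_Xd_comp_gaugeCoords _ hF, add_add_add_comm, htwo]
    simp only [XgaugeCoords]
    rw [bilin_self_add_bilin_rot_self, planarLap]
    ring
  have hsum : ∑ i, ((2 * g.1 i) ^ 2 + (2 * g.2.1 i) ^ 2) = 4 * (gaugeCoords g).1 := by
    simp only [gaugeCoords, sqn, mul_add, Finset.mul_sum, ← Finset.sum_add_distrib]
    ring_nf
  rw [subLap, Fintype.sum_sum_type, ← Finset.sum_add_distrib]
  simp only [hterm, Finset.sum_add_distrib, Finset.sum_const, Finset.card_univ, Fintype.card_fin,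
    nsmul_eq_mul, ← Finset.sum_mul, hsum]
  ring

lemma hasDerivAt_rpow_mul_comp {w τ u : ℝ → ℝ} {w' τ' u' x γ : ℝ}
    (hw : HasDerivAt w w' x) (hτ : HasDerivAt τ τ' x) (hu : HasDerivAt u u' (τ x))
    (hx : w x ≠ 0) :
    HasDerivAt (fun y => w y ^ γ * u (τ y))
      (γ * w x ^ (γ - 1) * w' * u (τ x) + w x ^ γ * (τ' * u')) x :=
  ((hw.rpow_const (p := γ) (Or.inl hx)).mul (hu.comp x hτ)).congr_deriv
    (by simp only [Function.comp_apply]; ring)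

lemma hasDerivAt_deriv_rpow_mul_comp {w τ w₁ τ₁ u : ℝ → ℝ} {w₂ τ₂ x γ : ℝ}
    (hu : ContDiff ℝ 2 u) (hw : ∀ᶠ y in 𝓝 x, HasDerivAt w (w₁ y) y)
    (hτ : ∀ᶠ y in 𝓝 x, HasDerivAt τ (τ₁ y) y) (hw₁ : HasDerivAt w₁ w₂ x)
    (hτ₁ : HasDerivAt τ₁ τ₂ x) (hx : 0 < w x) :
    HasDerivAt (deriv fun y => w y ^ γ * u (τ y))
      (γ * (γ - 1) * w x ^ (γ - 2) * w₁ x ^ 2 * u (τ x)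
        + γ * w x ^ (γ - 1) * w₂ * u (τ x)
        + 2 * γ * w x ^ (γ - 1) * w₁ x * τ₁ x * deriv u (τ x)
        + w x ^ γ * (τ₁ x ^ 2 * deriv (deriv u) (τ x) + τ₂ * deriv u (τ x))) x := by
  have hu₁ : Differentiable ℝ u := hu.differentiable (by norm_num)
  have hpos : ∀ᶠ y in 𝓝 x, 0 < w y :=
    hw.self_of_nhds.continuousAt.eventually (lt_mem_nhds hx)
  have hderiv : (deriv fun y => w y ^ γ * u (τ y)) =ᶠ[𝓝 x]
      fun y => γ * (w y ^ (γ - 1) * u (τ y)) * w₁ y + w y ^ γ * deriv u (τ y) * τ₁ y := by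
    filter_upwards [hw, hτ, hpos] with y hwy hτy hy
    rw [(hasDerivAt_rpow_mul_comp hwy hτy (hu₁ _).hasDerivAt hy.ne').deriv]
    ring
  have h₁ := hasDerivAt_rpow_mul_comp (γ := γ - 1) hw.self_of_nhds hτ.self_of_nhds
    (hu₁ _).hasDerivAt hx.ne'
  have h₂ := hasDerivAt_rpow_mul_comp (γ := γ) hw.self_of_nhds hτ.self_of_nhds
    (hu.differentiable_deriv_two _).hasDerivAt hx.ne'
  rw [show γ - 1 - 1 = γ - 2 by ring] at h₁
  refine HasDerivAt.congr_of_eventuallyEq ?_ hderiv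
  exact (((h₁.const_mul γ).mul hw₁).add (h₂.mul hτ₁)).congr_deriv (by ring)

lemma hasDerivAt_rpow_neg_half {f : ℝ → ℝ} {f' y : ℝ} (hf : HasDerivAt f f' y)
    (hy : 0 < f y) :
    HasDerivAt (fun y => f y ^ (-1 / 2 : ℝ)) (-(f' / 2) * (f y ^ (-1 / 2 : ℝ)) ^ 3) y := by
  refine (hf.rpow_const (p := -1 / 2) (Or.inl hy.ne')).congr_deriv ?_
  rw [← Real.rpow_natCast, ← Real.rpow_mul hy.le,
    show (-1 / 2 : ℝ) - 1 = -1 / 2 * (3 : ℕ) by norm_num]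
  ring

lemma rpow_sub_natCast_eq_mul_pow (γ : ℝ) {w : ℝ} (hw : 0 < w) (k : ℕ) :
    w ^ (γ - k) = w ^ γ * (w ^ (-1 / 2 : ℝ)) ^ (2 * k) := by
  rw [← Real.rpow_natCast, ← Real.rpow_mul hw.le, ← Real.rpow_add hw]
  push_cast
  ring_nf

def planeSq (q : ℝ × ℝ) : ℝ := q.1 ^ 2 + q.2 ^ 2

/-- `sin φ` for `q = (ρ cos φ, ρ sin φ)` with `ρ > 0`; at `q = (|z|², 4t)` this is `τ = 4t/N²`. -/
def polarSin (q : ℝ × ℝ) : ℝ := q.2 * planeSq q ^ (-1 / 2 : ℝ)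

def homogPlane (γ : ℝ) (u : ℝ → ℝ) (q : ℝ × ℝ) : ℝ :=
  planeSq q ^ γ * u (polarSin q)

lemma contDiffAt_homogPlane (γ : ℝ) {u : ℝ → ℝ} (hu : ContDiff ℝ 2 u) {q : ℝ × ℝ}
    (hq : planeSq q ≠ 0) : ContDiffAt ℝ 2 (homogPlane γ u) q := by
  have hsq : ContDiffAt ℝ 2 planeSq q := by unfold planeSq; fun_prop
  exact (hsq.rpow_const_of_ne hq).mul
    (hu.contDiffAt.comp q (contDiffAt_snd.mul (hsq.rpow_const_of_ne hq)))

theorem planarLap_homogPlane (γ : ℝ) {u : ℝ → ℝ} (hu : ContDiff ℝ 2 u) {q : ℝ × ℝ}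
    (hq : 0 < planeSq q) :
    planarLap (homogPlane γ u) q
      = planeSq q ^ (γ - 1) * ((1 - polarSin q ^ 2) * deriv (deriv u) (polarSin q)
          - polarSin q * deriv u (polarSin q) + 4 * γ ^ 2 * u (polarSin q)) := by
  obtain ⟨a, b⟩ := q
  change 0 < a ^ 2 + b ^ 2 at hq
  have hpos_fst : ∀ᶠ y in 𝓝 a, 0 < y ^ 2 + b ^ 2 :=
    (by fun_prop : Continuous fun y : ℝ => y ^ 2 + b ^ 2).continuousAt.eventually (lt_mem_nhds hq)
  have hpos_snd : ∀ᶠ y in 𝓝 b, 0 < a ^ 2 + y ^ 2 :=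
    (by fun_prop : Continuous fun y : ℝ => a ^ 2 + y ^ 2).continuousAt.eventually (lt_mem_nhds hq)
  have hr_fst : ∀ y, 0 < y ^ 2 + b ^ 2 → HasDerivAt (fun y => (y ^ 2 + b ^ 2) ^ (-1 / 2 : ℝ))
      (-y * ((y ^ 2 + b ^ 2) ^ (-1 / 2 : ℝ)) ^ 3) y := fun y hy =>
    (hasDerivAt_rpow_neg_half (((hasDerivAt_pow 2 y).add_const (b ^ 2))) hy).congr_deriv
      (by push_cast; ring)
  have hr_snd : ∀ y, 0 < a ^ 2 + y ^ 2 → HasDerivAt (fun y => (a ^ 2 + y ^ 2) ^ (-1 / 2 : ℝ))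
      (-y * ((a ^ 2 + y ^ 2) ^ (-1 / 2 : ℝ)) ^ 3) y := fun y hy =>
    (hasDerivAt_rpow_neg_half (((hasDerivAt_pow 2 y).const_add (a ^ 2))) hy).congr_deriv
      (by push_cast; ring)
  have hfst : HasDerivAt (deriv fun y => homogPlane γ u (y, b)) _ a :=
    hasDerivAt_deriv_rpow_mul_comp (γ := γ) hu
      (Eventually.of_forall fun y => ((hasDerivAt_pow 2 y).add_const (b ^ 2)).congr_deriv
        (by push_cast; ring : _ = 2 * y))
      (hpos_fst.mono fun y hy => (hr_fst y hy).const_mul b)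
      ((hasDerivAt_id' a).const_mul 2)
      (((hasDerivAt_id' a).neg.mul ((hr_fst a hq).pow 3)).const_mul b) hq
  have hsnd : HasDerivAt (deriv fun y => homogPlane γ u (a, y)) _ b :=
    hasDerivAt_deriv_rpow_mul_comp (γ := γ) hu
      (Eventually.of_forall fun y => ((hasDerivAt_pow 2 y).const_add (a ^ 2)).congr_deriv
        (by push_cast; ring : _ = 2 * y))
      (hpos_snd.mono fun y hy => (hasDerivAt_id' y).mul (hr_snd y hy))
      ((hasDerivAt_id' b).const_mul 2)
      (((hr_snd b hq).const_mul 1).add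
        ((hasDerivAt_id' b).mul ((hasDerivAt_id' b).neg.mul ((hr_snd b hq).pow 3)))) hq
  have hC := contDiffAt_homogPlane (q := (a, b)) γ hu hq.ne'
  rw [planarLap, fderiv_fderiv_apply_one_zero_eq_deriv_deriv hC,
    fderiv_fderiv_apply_zero_one_eq_deriv_deriv hC, hfst.deriv, hsnd.deriv]
  have hrel : (a ^ 2 + b ^ 2) * ((a ^ 2 + b ^ 2) ^ (-1 / 2 : ℝ)) ^ 2 = 1 := by
    simpa using (rpow_sub_natCast_eq_mul_pow 1 hq 1).symm
  rw [show γ - 2 = γ - (2 : ℕ) by norm_num, show γ - 1 = γ - (1 : ℕ) by norm_num,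
    planeSq, rpow_sub_natCast_eq_mul_pow γ hq, rpow_sub_natCast_eq_mul_pow γ hq]
  simp only [polarSin, planeSq, Pi.pow_apply, Pi.neg_apply]
  set r := (a ^ 2 + b ^ 2) ^ (-1 / 2 : ℝ)
  set W := (a ^ 2 + b ^ 2) ^ γ
  linear_combination (4 * γ * (γ - 1) * W * r ^ 2 * u (b * r)
    + (3 - 4 * γ) * W * b * r ^ 3 * deriv u (b * r)
    + W * b ^ 2 * r ^ 4 * deriv (deriv u) (b * r)) * hrel

theorem fderiv_homogPlane_apply_one_zero (γ : ℝ) {u : ℝ → ℝ} (hu : ContDiff ℝ 2 u)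
    {q : ℝ × ℝ} (hq : 0 < planeSq q) :
    fderiv ℝ (homogPlane γ u) q (1, 0)
      = q.1 * planeSq q ^ (γ - 1)
        * (2 * γ * u (polarSin q) - polarSin q * deriv u (polarSin q)) := by
  obtain ⟨a, b⟩ := q
  change 0 < a ^ 2 + b ^ 2 at hq
  have hslice : HasDerivAt (fun y => homogPlane γ u (y, b)) _ a :=
    hasDerivAt_rpow_mul_comp ((hasDerivAt_pow 2 a).add_const (b ^ 2))
      ((hasDerivAt_rpow_neg_half ((hasDerivAt_pow 2 a).add_const (b ^ 2)) hq).const_mul b)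
      ((hu.differentiable (by norm_num)) _).hasDerivAt hq.ne'
  have hC := contDiffAt_homogPlane (q := (a, b)) γ hu hq.ne'
  rw [fderiv_apply_one_zero_eq_deriv (hC.differentiableAt (by norm_num)), hslice.deriv,
    show γ - 1 = γ - (1 : ℕ) by norm_num]
  simp only [polarSin, planeSq, rpow_sub_natCast_eq_mul_pow γ hq]
  push_cast
  ring

lemma sqn_nonneg (x : Fin n → ℝ) : 0 ≤ sqn x := by
  unfold sqn; positivity

lemma sqn_pos {x : Fin n → ℝ} (hx : x ≠ 0) : 0 < sqn x := by
  obtain ⟨i, hi⟩ := Function.ne_iff.mp hx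
  have hi : x i ≠ 0 := hi
  exact Finset.sum_pos' (fun j _ => sq_nonneg (x j)) ⟨i, Finset.mem_univ i, by positivity⟩

lemma gaugeCoords_fst_pos {g : Hpt n} (hg : ¬(g.1 = 0 ∧ g.2.1 = 0)) : 0 < (gaugeCoords g).1 := by
  rcases not_and_or.mp hg with hx | hy
  · exact add_pos_of_pos_of_nonneg (sqn_pos hx) (sqn_nonneg _)
  · exact add_pos_of_nonneg_of_pos (sqn_nonneg _) (sqn_pos hy)

lemma gaugeN_rpow (h : Hpt n) (p : ℝ) : gaugeN h ^ p = planeSq (gaugeCoords h) ^ (p / 4) := by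
  have hsq : (sqn h.1 + sqn h.2.1) ^ 2 + 16 * h.2.2 ^ 2 = planeSq (gaugeCoords h) := by
    simp only [planeSq, gaugeCoords]; ring
  rw [gaugeN, hsq, ← Real.rpow_mul (by unfold planeSq; positivity)]
  ring_nf

lemma polarSin_gaugeCoords (h : Hpt n) :
    polarSin (gaugeCoords h) = 4 * h.2.2 / gaugeN h ^ 2 := by
  rw [← Real.rpow_natCast, gaugeN_rpow, polarSin, div_eq_mul_inv (4 * h.2.2),
    ← Real.rpow_neg (by unfold planeSq; positivity)]
  norm_num [gaugeCoords]

lemma gaugeN_rpow_mul_comp_eq_homogPlane (α : ℝ) (u : ℝ → ℝ) :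
    (fun h : Hpt n => gaugeN h ^ α * u (4 * h.2.2 / gaugeN h ^ 2))
      = fun h => homogPlane (α / 4) u (gaugeCoords h) := by
  funext h
  rw [gaugeN_rpow, ← polarSin_gaugeCoords, homogPlane]

end Heis

theorem stmt_4_general (n : ℕ) (α : ℝ) (u : ℝ → ℝ) (hu : ContDiff ℝ 2 u)
    (g : Hpt n) (hg : ¬(g.1 = 0 ∧ g.2.1 = 0))
    (τ : ℝ) (hτ : τ = 4 * g.2.2 / (gaugeN g) ^ 2) :
    subLap (fun h => gaugeN h ^ α * u (4 * h.2.2 / (gaugeN h) ^ 2)) g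
      = 4 * ((sqn g.1 + sqn g.2.1) / (gaugeN g) ^ 2) * gaugeN g ^ (α - 2) *
        ((1 - τ ^ 2) * deriv (deriv u) τ - ((n:ℝ) + 1) * τ * deriv u τ
          + (α * (α + 2*(n:ℝ)) / 4) * u τ) := by
  have hS := gaugeCoords_fst_pos hg
  have hq : 0 < planeSq (gaugeCoords g) := add_pos_of_pos_of_nonneg (pow_pos hS 2) (sq_nonneg _)
  have hscale : (sqn g.1 + sqn g.2.1) / gaugeN g ^ 2 * gaugeN g ^ (α - 2)
      = (gaugeCoords g).1 * planeSq (gaugeCoords g) ^ (α / 4 - 1) := by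
    rw [← Real.rpow_natCast, gaugeN_rpow, gaugeN_rpow, mul_comm_div, ← Real.rpow_sub hq]
    congr 2
    push_cast
    ring
  rw [hτ, ← polarSin_gaugeCoords, gaugeN_rpow_mul_comp_eq_homogPlane,
    subLap_comp_gaugeCoords (contDiffAt_homogPlane _ hu hq.ne'), planarLap_homogPlane _ hu hq,
    fderiv_homogPlane_apply_one_zero _ hu hq, mul_assoc 4 ((sqn g.1 + sqn g.2.1) / gaugeN g ^ 2),
    hscale]
  ring

/-- with `τ = 4t/N²`, `ψ = (|x|²+|y|²)/N²` and `v = N^α u(τ)`, away from the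
`t`-axis complement condition `(x,y) ≠ 0` one has
`ℒ₀v = 4 ψ N^(α-2) [(1-τ²)u'' - (n+1)τ u' + α(α+2n)/4 u]`. -/
theorem stmt_4 (n : ℕ) (hn : 1 ≤ n) (α : ℝ) (hα : 0 < α) (u : ℝ → ℝ) (hu : ContDiff ℝ 2 u)
    (g : Hpt n) (hg : ¬(g.1 = 0 ∧ g.2.1 = 0))
    (τ : ℝ) (hτ : τ = 4 * g.2.2 / (gaugeN g) ^ 2) :
    subLap (fun h => gaugeN h ^ α * u (4 * h.2.2 / (gaugeN h) ^ 2)) g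
      = 4 * ((sqn g.1 + sqn g.2.1) / (gaugeN g) ^ 2) * gaugeN g ^ (α - 2) *
        ((1 - τ ^ 2) * deriv (deriv u) τ - ((n:ℝ) + 1) * τ * deriv u τ
          + (α * (α + 2*(n:ℝ)) / 4) * u τ) :=
  stmt_4_general n α u hu g hg τ hτ
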